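/- Let P, Q be positive semidefinite d×d matrices and X a d×d matrix. The block matrix [[P, X],[X*, Q]] is positive semidefinite if and only if X = P^{1/2} U Q^{1/2} for some contraction U with ‖U‖ ≤ 1. -/

import Mathlib

/-!
Write `P = S²`, `Q = S'²` with `S = P^{1/2}`, `S' = Q^{1/2}`. If `X = S U S'` with `U*U ≤ 1`, the
block matrix is the congruence of `[[1, U], [U*, 1]]` by `diag(S, S')`, and that matrix is positive
because its Schur complement `1 - U*U` is. Conversely, positivity of the block matrix gives
`ker P ⊆ ker X*` and `ker Q ⊆ ker X`, so `X = (S S⁺) X (S' S'⁺)` with `S⁺` the pseudo-inverse of `S`.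
Congruence by `diag(S⁺, S'⁺)` turns the block matrix into `[[S S⁺, U], [U*, S' S'⁺]]` with
`U = S⁺ X S'⁺`, and adding the projections `1 - S S⁺`, `1 - S' S'⁺` on the diagonal shows
`[[1, U], [U*, 1]] ⪰ 0`.
-/

open Matrix BigOperators Finset ComplexOrder

variable {d n : ℕ}

open Classical in
/-- The positive semidefinite square root (zero if not PSD). -/
noncomputable def psqrt (A : Matrix (Fin d) (Fin d) ℂ) : Matrix (Fin d) (Fin d) ℂ :=
  if h : A.PosSemidef then (open scoped MatrixOrder Matrix.Norms.L2Operator in CFC.sqrt A) else 0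

/-- Trace norm ‖A‖₁ = Tr √(A*A). -/
noncomputable def traceNorm (A : Matrix (Fin d) (Fin d) ℂ) : ℝ :=
  ((psqrt (Aᴴ * A)).trace).re

/-- Fidelity F(ρ,σ) = Tr √(σ^{1/2} ρ σ^{1/2}). -/
noncomputable def fid (ρ σ : Matrix (Fin d) (Fin d) ℂ) : ℝ :=
  ((psqrt (psqrt σ * ρ * psqrt σ)).trace).re

/-- Density matrix: positive semidefinite with unit trace. -/
def IsDensity (ρ : Matrix (Fin d) (Fin d) ℂ) : Prop := ρ.PosSemidef ∧ ρ.trace = 1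

/-- Contraction: spectral norm at most one, i.e. 1 - UᴴU ⪰ 0. -/
def IsContraction (U : Matrix (Fin d) (Fin d) ℂ) : Prop := (1 - Uᴴ * U).PosSemidef

/-- Probability vector. -/
def IsProbVec (p : Fin n → ℝ) : Prop := (∀ i, 0 ≤ p i) ∧ ∑ i, p i = 1

open scoped MatrixOrder Matrix.Norms.L2Operator

namespace Matrix

lemma fromBlocks_diag_conjTranspose_mul_mul {ι ι' κ κ' α : Type*} [Fintype ι] [Fintype κ]
    [NonUnitalSemiring α] [StarRing α]
    (A : Matrix ι ι' α) (B : Matrix κ κ' α) (P : Matrix ι ι α) (X : Matrix ι κ α)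
    (Y : Matrix κ ι α) (Q : Matrix κ κ α) :
    (fromBlocks A 0 0 B)ᴴ * fromBlocks P X Y Q * fromBlocks A 0 0 B =
      fromBlocks (Aᴴ * P * A) (Aᴴ * X * B) (Bᴴ * Y * A) (Bᴴ * Q * B) := by
  simp [fromBlocks_conjTranspose, fromBlocks_multiply]

section PosSemidef

variable {ι κ μ 𝕜 : Type*} [RCLike 𝕜]

lemma posSemidef_fromBlocks_swap {P : Matrix ι ι 𝕜} {X : Matrix ι κ 𝕜} {Y : Matrix κ ι 𝕜}
    {Q : Matrix κ κ 𝕜} (h : (fromBlocks P X Y Q).PosSemidef) :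
    (fromBlocks Q Y X P).PosSemidef := by
  simpa [fromBlocks_submatrix_sum_swap_sum_swap] using h.submatrix (Equiv.sumComm κ ι)

variable [Fintype ι] [Fintype κ]

lemma PosSemidef.mul_eq_zero_of_conjTranspose_mul_mul_eq_zero {M : Matrix ι ι 𝕜}
    (hM : M.PosSemidef) {C : Matrix ι μ 𝕜} (h : Cᴴ * M * C = 0) : M * C = 0 := by
  classical
  obtain ⟨B, rfl⟩ := CStarAlgebra.nonneg_iff_eq_star_mul_self.mp hM.nonneg
  rw [star_eq_conjTranspose] at h ⊢
  rw [conjTranspose_mul_self_mul_eq_zero, ← conjTranspose_mul_self_eq_zero, conjTranspose_mul]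
  simpa only [Matrix.mul_assoc] using h

lemma PosSemidef.fromBlocks_diag {A : Matrix ι ι 𝕜} {B : Matrix κ κ 𝕜} (hA : A.PosSemidef)
    (hB : B.PosSemidef) : (fromBlocks A 0 0 B).PosSemidef := by
  classical
  obtain ⟨C, rfl⟩ := CStarAlgebra.nonneg_iff_eq_star_mul_self.mp hA.nonneg
  obtain ⟨D, rfl⟩ := CStarAlgebra.nonneg_iff_eq_star_mul_self.mp hB.nonneg
  have := PosSemidef.one.conjTranspose_mul_mul_same (fromBlocks C 0 0 D)
  rw [← fromBlocks_one, fromBlocks_diag_conjTranspose_mul_mul] at this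
  simpa [star_eq_conjTranspose] using this

variable {P : Matrix ι ι 𝕜} {X : Matrix ι κ 𝕜} {Q : Matrix κ κ 𝕜}

lemma PosSemidef.conjTranspose_mul_eq_zero_of_fromBlocks (h : (fromBlocks P X Xᴴ Q).PosSemidef)
    {R : Matrix ι μ 𝕜} (hR : P * R = 0) : Xᴴ * R = 0 := by
  have hC : (fromBlocks R 0 0 (0 : Matrix κ κ 𝕜))ᴴ * fromBlocks P X Xᴴ Q *
      fromBlocks R 0 0 (0 : Matrix κ κ 𝕜) = 0 := by
    rw [fromBlocks_diag_conjTranspose_mul_mul, Matrix.mul_assoc, hR]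
    simp
  have := congrArg toBlocks₂₁ (h.mul_eq_zero_of_conjTranspose_mul_mul_eq_zero hC)
  simp only [fromBlocks_multiply, Matrix.mul_zero, add_zero, toBlocks_fromBlocks₂₁] at this
  exact this

lemma PosSemidef.mul_eq_zero_of_fromBlocks (h : (fromBlocks P X Xᴴ Q).PosSemidef)
    {R : Matrix κ μ 𝕜} (hR : Q * R = 0) : X * R = 0 := by
  have h' : (fromBlocks Q Xᴴ Xᴴᴴ P).PosSemidef := by simpa using posSemidef_fromBlocks_swap h
  simpa using h'.conjTranspose_mul_eq_zero_of_fromBlocks hR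

lemma fromBlocks_one_posSemidef_iff [DecidableEq ι] [DecidableEq κ] (U : Matrix ι κ 𝕜) :
    (fromBlocks 1 U Uᴴ 1).PosSemidef ↔ (1 - Uᴴ * U).PosSemidef := by
  have := invertibleOne (α := Matrix ι ι 𝕜)
  simpa using PosDef.fromBlocks₁₁ U 1 (PosDef.one (n := ι) (R := 𝕜))

end PosSemidef

section Pinv

variable {ι 𝕜 : Type*} [Fintype ι] [DecidableEq ι] [RCLike 𝕜]

lemma cfc_mul' (f g : ℝ → ℝ) (A : Matrix ι ι 𝕜) :
    cfc (fun x => f x * g x) A = cfc f A * cfc g A :=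
  cfc_mul f g A (A.finite_real_spectrum.continuousOn f) (A.finite_real_spectrum.continuousOn g)

/-- The Moore–Penrose pseudo-inverse when `S` is Hermitian: since `0⁻¹ = 0`, `(·⁻¹)` inverts the
nonzero eigenvalues and keeps the zero ones. -/
noncomputable def pinv (S : Matrix ι ι 𝕜) : Matrix ι ι 𝕜 := cfc (·⁻¹ : ℝ → ℝ) S

variable {S : Matrix ι ι 𝕜}

lemma isHermitian_pinv : (pinv S).IsHermitian := cfc_predicate _ _

lemma commute_pinv (hS : S.IsHermitian) : Commute S (pinv S) := by
  have h := cfc_commute_cfc (fun x : ℝ => x) (·⁻¹) S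
  rwa [cfc_id' ℝ S] at h

lemma mul_self_mul_pinv (hS : S.IsHermitian) : S * S * pinv S = S := by
  have h : cfc (fun x : ℝ => x * x * x⁻¹) S = S := by
    simp_rw [mul_self_mul_inv]; exact cfc_id' ℝ S
  rwa [cfc_mul', cfc_mul', cfc_id' ℝ S] at h

lemma posSemidef_one_sub_mul_pinv (hS : S.IsHermitian) : (1 - S * pinv S).PosSemidef := by
  have h : S * pinv S = cfc (fun x : ℝ => x * x⁻¹) S := by rw [cfc_mul', cfc_id' ℝ S, pinv]
  rw [h, ← le_iff]
  exact cfc_le_one _ _ fun x _ => mul_inv_le_one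

lemma mul_self_mul_one_sub_mul_pinv (hS : S.IsHermitian) : S * S * (1 - S * pinv S) = 0 := by
  have h := congrArg (S * ·) (mul_self_mul_pinv hS)
  simp only [← Matrix.mul_assoc] at h
  rw [Matrix.mul_sub, Matrix.mul_one, ← Matrix.mul_assoc, h, sub_self]

lemma pinv_mul_mul_self_mul_pinv (hS : S.IsHermitian) :
    pinv S * (S * S) * pinv S = S * pinv S := by
  have hc := commute_pinv hS
  rw [← (hc.mul_left hc).eq, mul_self_mul_pinv hS]

end Pinv

section Factorization

variable {ι κ 𝕜 : Type*} [Fintype ι] [Fintype κ] [DecidableEq ι] [DecidableEq κ] [RCLike 𝕜]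
  {S : Matrix ι ι 𝕜} {S' : Matrix κ κ 𝕜}

lemma exists_contraction_of_posSemidef_fromBlocks_mul_self (hS : S.IsHermitian)
    (hS' : S'.IsHermitian) {X : Matrix ι κ 𝕜} (h : (fromBlocks (S * S) X Xᴴ (S' * S')).PosSemidef) :
    ∃ U : Matrix ι κ 𝕜, (1 - Uᴴ * U).PosSemidef ∧ X = S * U * S' := by
  have hR := posSemidef_one_sub_mul_pinv hS
  have hR' := posSemidef_one_sub_mul_pinv hS'
  have hX : S * pinv S * X = X := by
    have := congrArg conjTranspose
      (h.conjTranspose_mul_eq_zero_of_fromBlocks (mul_self_mul_one_sub_mul_pinv hS))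
    rw [conjTranspose_mul, conjTranspose_conjTranspose, hR.isHermitian.eq, conjTranspose_zero,
      Matrix.sub_mul, Matrix.one_mul, sub_eq_zero] at this
    exact this.symm
  have hX' : X * (S' * pinv S') = X := by
    have := h.mul_eq_zero_of_fromBlocks (mul_self_mul_one_sub_mul_pinv hS')
    rwa [Matrix.mul_sub, Matrix.mul_one, sub_eq_zero, eq_comm] at this
  refine ⟨pinv S * X * pinv S', ?_, ?_⟩
  · rw [← fromBlocks_one_posSemidef_iff]
    have h₁ := h.conjTranspose_mul_mul_same (fromBlocks (pinv S) 0 0 (pinv S'))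
    rw [fromBlocks_diag_conjTranspose_mul_mul, isHermitian_pinv.eq, isHermitian_pinv.eq,
      pinv_mul_mul_self_mul_pinv hS, pinv_mul_mul_self_mul_pinv hS'] at h₁
    convert h₁.add (hR.fromBlocks_diag hR') using 1
    simp [fromBlocks_add, conjTranspose_mul, isHermitian_pinv.eq, Matrix.mul_assoc]
  · calc X = S * pinv S * X * (S' * pinv S') := by rw [hX, hX']
      _ = S * (pinv S * X * pinv S') * S' := by
        rw [(commute_pinv hS').eq]; simp only [Matrix.mul_assoc]

lemma posSemidef_fromBlocks_mul_self_iff (hS : S.IsHermitian) (hS' : S'.IsHermitian)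
    (X : Matrix ι κ 𝕜) :
    (fromBlocks (S * S) X Xᴴ (S' * S')).PosSemidef ↔
      ∃ U : Matrix ι κ 𝕜, (1 - Uᴴ * U).PosSemidef ∧ X = S * U * S' := by
  refine ⟨exists_contraction_of_posSemidef_fromBlocks_mul_self hS hS', ?_⟩
  rintro ⟨U, hU, rfl⟩
  have h := ((fromBlocks_one_posSemidef_iff U).mpr hU).conjTranspose_mul_mul_same
    (fromBlocks S 0 0 S')
  rw [fromBlocks_diag_conjTranspose_mul_mul] at h
  simpa [hS.eq, hS'.eq, conjTranspose_mul, Matrix.mul_assoc] using h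

end Factorization

end Matrix

lemma psqrt_of_posSemidef {A : Matrix (Fin d) (Fin d) ℂ} (hA : A.PosSemidef) :
    psqrt A = CFC.sqrt A :=
  dif_pos hA

/-- The block matrix [[P, X],[X*, Q]] is PSD iff X = P^{1/2} U Q^{1/2} for a contraction U. -/
theorem fromBlocks_posSemidef_iff (P Q X : Matrix (Fin d) (Fin d) ℂ)
    (hP : P.PosSemidef) (hQ : Q.PosSemidef) :
    (Matrix.fromBlocks P X Xᴴ Q).PosSemidef ↔
      ∃ U : Matrix (Fin d) (Fin d) ℂ, IsContraction U ∧ X = psqrt P * U * psqrt Q := by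
  have h := posSemidef_fromBlocks_mul_self_iff (CFC.sqrt_nonneg P).posSemidef.isHermitian
    (CFC.sqrt_nonneg Q).posSemidef.isHermitian X
  rw [CFC.sqrt_mul_sqrt_self P hP.nonneg, CFC.sqrt_mul_sqrt_self Q hQ.nonneg] at h
  rw [psqrt_of_posSemidef hP, psqrt_of_posSemidef hQ]
  exact h
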